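/- arXiv:2306.10655 — 2 statements merged into one kernel-verified Lean document; each statement's English description precedes it below -/
import Mathlib

section
/- Let 0 < α < 1 and γ > 0, and let (f_m)_{m≥1} be defined by the stated recursion. Then for each m ∈ ℕ there exists a constant C > 0 such that for all integers j ≥ 1: |(1−α)^γ (1 + f_1 j^{−1})(1 + f_2 j^{−2}) ⋯ (1 + f_m j^{−m}) F_j − 1| ≤ C j^{−m−1}; that is, (1−α)^γ ∏_{i=1}^m (1 + f_i j^{−i}) F_j = 1 + O(j^{−m−1}) as j → ∞. -/
/-- Pochhammer symbol `(γ)_l = γ(γ+1)⋯(γ+l−1)`. -/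
noncomputable def poch (γ : ℝ) (l : ℕ) : ℝ := ∏ i ∈ Finset.range l, (γ + i)

/-- `F_j(α,γ) = ∑_{l≥0} α^l (γ)_l/l! · jγ/(jγ+l)`, with the `l = 0` summand interpreted as `1`. -/
noncomputable def Fseq (α γ : ℝ) (j : ℕ) : ℝ :=
  ∑' l : ℕ, if l = 0 then 1 else
    α^l * poch γ l / (Nat.factorial l) * ((j*γ)/(j*γ + l))

/-- Stirling numbers of the second kind. -/
def stirling2 : ℕ → ℕ → ℕ
  | 0, 0 => 1
  | 0, _+1 => 0
  | _+1, 0 => 0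
  | n+1, k+1 => (k+1) * stirling2 n (k+1) + stirling2 n k

/-- `t_n(α,γ) = (−1)^n γ^{−n} ∑_{i=0}^n S(n,i) (γ)_i (α/(1−α))^i`. -/
noncomputable def tcoef (α γ : ℝ) (n : ℕ) : ℝ :=
  (-1)^n * (γ^n)⁻¹ *
    ∑ i ∈ Finset.range (n+1), (stirling2 n i : ℝ) * poch γ i * (α/(1-α))^i

/-- Sum of products `f_{l_s}⋯f_{l_1}` over strictly decreasing integer sequences
`m ≥ l_s > ⋯ > l_1 ≥ 1` with `l_1+⋯+l_s = k` (realized as subsets of `{1,…,m}` with sum `k`). -/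
noncomputable def ppSum (f : ℕ → ℝ) (m k : ℕ) : ℝ :=
  ∑ S ∈ (Finset.Icc 1 m).powerset.filter (fun S => S.sum id = k), ∏ l ∈ S, f l

/-!
Expanding `jγ/(jγ + l)` geometrically in `l/(jγ)` and summing against the binomial series
`∑ (γ)_l/l! α^l = (1-α)^(-γ)` gives `(1-α)^γ F_j = ∑_{n ≤ m} t_n j^(-n) + O(j^(-m-1))`: up to the
factor `(-γ)^(-n)`, `t_n` is the `n`-th moment `∑ l^n (γ)_l/l! α^l` normalised by `(1-α)^γ`, and
these moments are computed from `l^n = ∑ S(n,i) l(l-1)⋯(l-i+1)`. The recursion for `f` says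
precisely that `∏_{i ≤ m} (1 + f_i y^i)` inverts `∑_{n ≤ m} t_n y^n` modulo `y^(m+1)`, so at
`y = 1/j` the product with the expansion is `1 + O(j^(-m-1))`.
-/

open Finset Polynomial Nat

lemma poch_succ (γ : ℝ) (l : ℕ) : poch γ (l + 1) = poch γ l * (γ + l) :=
  prod_range_succ _ _

lemma poch_nonneg {γ : ℝ} (hγ : 0 ≤ γ) (l : ℕ) : 0 ≤ poch γ l :=
  prod_nonneg fun _ _ => by positivity

lemma poch_add (γ : ℝ) (i k : ℕ) : poch γ (i + k) = poch γ i * poch (γ + i) k := by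
  simp only [poch, prod_range_add, add_assoc]
  push_cast
  rfl

lemma ascPochhammer_eval_eq_poch (γ : ℝ) (n : ℕ) : (ascPochhammer ℝ n).eval γ = poch γ n := by
  induction n with
  | zero => simp [poch]
  | succ n ih => rw [ascPochhammer_succ_eval, ih, poch_succ]

lemma ringChoose_eq_poch_div_factorial (γ : ℝ) (n : ℕ) :
    Ring.choose (γ + n - 1) n = poch γ n / n ! := by
  rw [← Ring.multichoose_eq, eq_div_iff (by positivity), mul_comm, ← nsmul_eq_mul,
    Ring.factorial_nsmul_multichoose_eq_ascPochhammer, ascPochhammer_smeval_eq_eval,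
    ascPochhammer_eval_eq_poch]

/-- The `l`-th term of the binomial series of `(1 - x)^(-γ)`. -/
noncomputable def negBinomTerm (γ x : ℝ) (l : ℕ) : ℝ := poch γ l / l ! * x ^ l

lemma negBinomTerm_nonneg {γ x : ℝ} (hγ : 0 ≤ γ) (hx : 0 ≤ x) (l : ℕ) :
    0 ≤ negBinomTerm γ x l := by
  have := poch_nonneg hγ l
  unfold negBinomTerm
  positivity

lemma hasSum_negBinomTerm (γ : ℝ) {x : ℝ} (hx : |x| < 1) :
    HasSum (negBinomTerm γ x) ((1 - x) ^ γ)⁻¹ := by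
  have hx' : x ∈ Metric.eball (0 : ℝ) 1 := by
    simpa [Metric.mem_eball, edist_dist, Real.dist_eq] using hx
  have := (Real.one_div_one_sub_rpow_hasFPowerSeriesOnBall_zero γ).hasSum hx'
  simp only [FormalMultilinearSeries.ofScalars_apply_eq, ringChoose_eq_poch_div_factorial,
    smul_eq_mul, zero_add, one_div] at this
  exact this

lemma stirling2_eq_stirlingSecond : stirling2 = stirlingSecond := by
  funext n k
  induction n generalizing k with
  | zero => cases k <;> rfl
  | succ n ih => cases k <;> simp [stirling2, stirlingSecond_succ_succ, ih]

lemma mul_descFactorial (l i : ℕ) :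
    l * l.descFactorial i = l.descFactorial (i + 1) + i * l.descFactorial i := by
  rcases lt_or_ge l i with h | h
  · simp [descFactorial_eq_zero_iff_lt.mpr h]
  · rw [descFactorial_succ, ← add_mul, Nat.sub_add_cancel h]

lemma pow_eq_sum_stirlingSecond_mul_descFactorial (n l : ℕ) :
    l ^ n = ∑ i ∈ range (n + 1), stirlingSecond n i * l.descFactorial i := by
  induction n with
  | zero => simp
  | succ n ih =>
    have hshift : ∑ i ∈ range (n + 1), stirlingSecond n i * (i * l.descFactorial i)
        = ∑ i ∈ range (n + 1), (i + 1) * stirlingSecond n (i + 1) * l.descFactorial (i + 1) := by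
      rw [sum_range_succ' _ n, sum_range_succ _ n, stirlingSecond_eq_zero_of_lt n.lt_succ_self]
      simp only [mul_zero, zero_mul, add_zero, mul_left_comm, mul_assoc]
    calc l ^ (n + 1)
        = ∑ i ∈ range (n + 1), stirlingSecond n i * l.descFactorial (i + 1)
          + ∑ i ∈ range (n + 1), stirlingSecond n i * (i * l.descFactorial i) := by
          rw [pow_succ, ih, sum_mul, ← sum_add_distrib]
          exact sum_congr rfl fun i _ => by rw [mul_assoc, mul_comm _ l, mul_descFactorial, mul_add]
      _ = ∑ i ∈ range (n + 2), stirlingSecond (n + 1) i * l.descFactorial i := by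
          rw [hshift, sum_range_succ' _ (n + 1), ← sum_add_distrib]
          simp only [stirlingSecond_succ_succ, stirlingSecond_succ_zero, zero_mul, add_zero]
          exact sum_congr rfl fun i _ => by ring

lemma hasSum_negBinomTerm_mul_descFactorial (γ : ℝ) {x : ℝ} (hx : |x| < 1) (i : ℕ) :
    HasSum (fun l => negBinomTerm γ x l * l.descFactorial i)
      (poch γ i * (x / (1 - x)) ^ i * ((1 - x) ^ γ)⁻¹) := by
  have hx1 : 0 < 1 - x := by linarith [le_abs_self x]
  have hterm : ∀ k, negBinomTerm γ x (k + i) * (k + i).descFactorial i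
      = poch γ i * x ^ i * negBinomTerm (γ + i) x k := by
    intro k
    rw [add_comm k i]
    have hfac : ((i + k) ! : ℝ) = k ! * (i + k).descFactorial i := by
      rw [← factorial_mul_descFactorial (le_self_add : i ≤ i + k), Nat.add_sub_cancel_left]
      push_cast
      rfl
    have : ((i + k).descFactorial i : ℝ) ≠ 0 := by
      exact_mod_cast (descFactorial_pos.mpr le_self_add).ne'
    rw [negBinomTerm, negBinomTerm, poch_add, hfac, pow_add]
    field_simp
  -- The first `i` terms vanish, and the shifted series is the binomial series for `γ + i`.
  have hval : poch γ i * (x / (1 - x)) ^ i * ((1 - x) ^ γ)⁻¹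
      = poch γ i * x ^ i * ((1 - x) ^ (γ + i))⁻¹ := by
    rw [Real.rpow_add hx1, Real.rpow_natCast, div_pow]
    field_simp
  rw [← hasSum_nat_add_iff' i, sum_eq_zero fun l hl => by
    simp [descFactorial_eq_zero_iff_lt.mpr (mem_range.mp hl)], sub_zero, hval]
  exact ((hasSum_negBinomTerm (γ + i) hx).mul_left (poch γ i * x ^ i)).congr_fun hterm

lemma hasSum_negBinomTerm_mul_pow (γ : ℝ) {x : ℝ} (hx : |x| < 1) (n : ℕ) :
    HasSum (fun l => negBinomTerm γ x l * (l : ℝ) ^ n)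
      ((∑ i ∈ range (n + 1), (stirling2 n i : ℝ) * poch γ i * (x / (1 - x)) ^ i)
        * ((1 - x) ^ γ)⁻¹) := by
  have hsum := hasSum_sum fun i (_ : i ∈ range (n + 1)) =>
    (hasSum_negBinomTerm_mul_descFactorial γ hx i).mul_left (stirling2 n i : ℝ)
  rw [sum_mul]
  simp only [mul_assoc] at hsum ⊢
  refine hsum.congr_fun fun l => ?_
  rw [← Nat.cast_pow, pow_eq_sum_stirlingSecond_mul_descFactorial, stirling2_eq_stirlingSecond]
  push_cast
  rw [mul_sum]
  exact sum_congr rfl fun i _ => by ring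

lemma hasSum_negBinomTerm_mul_neg_div_pow (γ : ℝ) {α : ℝ} (hα : |α| < 1) (a : ℝ) (n : ℕ) :
    HasSum (fun l => negBinomTerm γ α l * (-l / (a * γ)) ^ n)
      (tcoef α γ n / a ^ n * ((1 - α) ^ γ)⁻¹) := by
  have h := (hasSum_negBinomTerm_mul_pow γ hα n).mul_left ((-1) ^ n * ((a * γ) ^ n)⁻¹)
  rw [show tcoef α γ n / a ^ n * ((1 - α) ^ γ)⁻¹ = (-1) ^ n * ((a * γ) ^ n)⁻¹ *
      ((∑ i ∈ range (n + 1), (stirling2 n i : ℝ) * poch γ i * (α / (1 - α)) ^ i)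
        * ((1 - α) ^ γ)⁻¹) by unfold tcoef; ring]
  exact h.congr_fun fun l => by ring

lemma Fseq_eq_tsum (α γ : ℝ) {j : ℕ} (h : (j : ℝ) * γ ≠ 0) :
    Fseq α γ j = ∑' l, negBinomTerm γ α l * (j * γ / (j * γ + l)) := by
  refine tsum_congr fun l => ?_
  cases l with
  | zero => simp [negBinomTerm, poch, h]
  | succ l => simp only [negBinomTerm, if_neg l.succ_ne_zero]; ring

lemma div_add_eq_geom_sum_add {A x : ℝ} (hA : A ≠ 0) (hAx : A + x ≠ 0) (N : ℕ) :
    A / (A + x) = ∑ n ∈ range N, (-x / A) ^ n + (-x / A) ^ N * (A / (A + x)) := by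
  induction N with
  | zero => simp
  | succ N ih =>
    nth_rewrite 1 [ih]
    rw [sum_range_succ, add_assoc, pow_succ]
    field_simp
    ring

/-- The remainder series is dominated termwise by the absolute values of the next moment terms,
which all have the sign `(-1)^(m+1)`. -/
lemma abs_mul_Fseq_sub_sum_tcoef_le {α γ : ℝ} (hα0 : 0 ≤ α) (hα1 : α < 1) (hγ : 0 < γ)
    (m : ℕ) {j : ℕ} (hj : j ≠ 0) :
    |(1 - α) ^ γ * Fseq α γ j - ∑ n ∈ range (m + 1), tcoef α γ n / (j : ℝ) ^ n|
      ≤ |tcoef α γ (m + 1)| / (j : ℝ) ^ (m + 1) := by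
  have hα : |α| < 1 := abs_lt.mpr ⟨by linarith, hα1⟩
  have hg : 0 < (1 - α) ^ γ := Real.rpow_pos_of_pos (by linarith) γ
  have hterms := fun n => hasSum_negBinomTerm_mul_neg_div_pow γ hα j n
  set A : ℝ := j * γ
  have hA : 0 < A := by positivity
  set c := negBinomTerm γ α
  have hc : ∀ l, 0 ≤ c l := negBinomTerm_nonneg hγ.le hα0
  have hdom : HasSum (fun l => |c l * (-l / A) ^ (m + 1)|)
      ((-1) ^ (m + 1) * (tcoef α γ (m + 1) / j ^ (m + 1) * ((1 - α) ^ γ)⁻¹)) := by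
    refine ((hterms (m + 1)).mul_left _).congr_fun fun l => ?_
    have : -(l : ℝ) / A ≤ 0 := div_nonpos_of_nonpos_of_nonneg (by simp) hA.le
    rw [abs_mul, abs_of_nonneg (hc l), abs_pow, abs_of_nonpos this, mul_left_comm, ← mul_pow,
      neg_one_mul]
  have hrem_le : ∀ l : ℕ, |c l * ((-l / A) ^ (m + 1) * (A / (A + l)))|
      ≤ |c l * (-l / A) ^ (m + 1)| := fun l => by
    have h0 : 0 ≤ A / (A + l) := by positivity
    have h1 : A / (A + l) ≤ 1 := (div_le_one (by positivity)).mpr (by simp)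
    rw [← mul_assoc, abs_mul, abs_of_nonneg h0]
    exact mul_le_of_le_one_right (abs_nonneg _) h1
  obtain ⟨R, hrem⟩ := Summable.of_norm_bounded (E := ℝ) hdom.summable hrem_le
  have hF : Fseq α γ j = (∑ n ∈ range (m + 1), tcoef α γ n / j ^ n * ((1 - α) ^ γ)⁻¹) + R := by
    refine (Fseq_eq_tsum α γ hA.ne').trans (HasSum.tsum_eq ?_)
    refine ((hasSum_sum fun n _ => hterms n).add hrem).congr_fun fun l => ?_
    nth_rw 1 [div_add_eq_geom_sum_add hA.ne' (by positivity : A + l ≠ 0) (m + 1)]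
    rw [mul_add, mul_sum]
  have hR : |R| ≤ |tcoef α γ (m + 1)| / j ^ (m + 1) * ((1 - α) ^ γ)⁻¹ := by
    refine (abs_le.mpr ⟨hasSum_le (fun l => neg_le_of_abs_le (hrem_le l)) hdom.neg hrem,
      hasSum_le (fun l => le_of_abs_le (hrem_le l)) hrem hdom⟩).trans ((le_abs_self _).trans_eq ?_)
    simp [abs_mul, abs_div, abs_of_pos hg]
  have hdiff : (1 - α) ^ γ * Fseq α γ j - ∑ n ∈ range (m + 1), tcoef α γ n / (j : ℝ) ^ n
      = (1 - α) ^ γ * R := by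
    rw [hF, mul_add, mul_sum, add_sub_right_comm,
      sub_eq_zero_of_eq (sum_congr rfl fun n _ => by field_simp), zero_add]
  rw [hdiff, abs_mul, abs_of_pos hg]
  calc (1 - α) ^ γ * |R| ≤ (1 - α) ^ γ * (|tcoef α γ (m + 1)| / j ^ (m + 1) * ((1 - α) ^ γ)⁻¹) :=
        mul_le_mul_of_nonneg_left hR hg.le
    _ = |tcoef α γ (m + 1)| / j ^ (m + 1) := by field_simp

noncomputable def prodPoly (f : ℕ → ℝ) (m : ℕ) : ℝ[X] := ∏ i ∈ Icc 1 m, (1 + C (f i) * X ^ i)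

lemma coeff_prodPoly (f : ℕ → ℝ) (m k : ℕ) : (prodPoly f m).coeff k = ppSum f m k := by
  have hexpand : prodPoly f m = ∑ S ∈ (Icc 1 m).powerset, C (∏ i ∈ S, f i) * X ^ S.sum id := by
    rw [prodPoly, prod_one_add]
    exact sum_congr rfl fun S _ => by rw [prod_mul_distrib, ← map_prod, prod_pow_eq_pow_sum]; rfl
  rw [hexpand, finsetSum_coeff, ppSum, sum_filter]
  exact sum_congr rfl fun S _ => by simp only [coeff_C_mul_X_pow, eq_comm]

lemma ppSum_zero_right (f : ℕ → ℝ) (m : ℕ) : ppSum f m 0 = 1 := by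
  rw [← coeff_prodPoly, coeff_zero_eq_eval_zero, prodPoly, eval_prod]
  exact prod_eq_one fun i hi => by simp [show i ≠ 0 by have := (mem_Icc.mp hi).1; omega]

lemma ppSum_succ (f : ℕ → ℝ) (m k : ℕ) :
    ppSum f (m + 1) k
      = ppSum f m k + if m + 1 ≤ k then f (m + 1) * ppSum f m (k - (m + 1)) else 0 := by
  simp only [← coeff_prodPoly, prodPoly, prod_Icc_succ_top (by omega : 1 ≤ m + 1)]
  rw [mul_add, mul_one, coeff_add, mul_left_comm, ← mul_assoc, coeff_mul_X_pow', coeff_C_mul]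

lemma sum_mul_ppSum_eq_zero {t f : ℕ → ℝ} (ht0 : t 0 = 1)
    (hf : ∀ m, f (m + 1) = -t (m + 1) - ∑ n ∈ range (m + 1), t n * ppSum f m (m + 1 - n)) :
    ∀ {m K : ℕ}, 0 < K → K ≤ m → ∑ n ∈ range (K + 1), t n * ppSum f m (K - n) = 0 := by
  intro m
  induction m with
  | zero => intro K hK hKm; omega
  | succ m ih =>
    intro K hK hKm
    have hextra : ∑ n ∈ range (K + 1),
        t n * (if m + 1 ≤ K - n then f (m + 1) * ppSum f m (K - n - (m + 1)) else 0)
          = if K = m + 1 then f (m + 1) else 0 := by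
      rw [sum_eq_single 0 (fun n _ hn => by rw [if_neg (by omega), mul_zero]) (by simp)]
      split_ifs <;> simp_all [ppSum_zero_right]; omega
    simp only [ppSum_succ, mul_add, sum_add_distrib, hextra]
    rcases hKm.lt_or_eq with hlt | rfl
    · rw [ih hK (by omega), if_neg hlt.ne, add_zero]
    · rw [if_pos rfl, sum_range_succ, hf m, Nat.sub_self, ppSum_zero_right]
      ring

lemma X_pow_dvd_prodPoly_mul_sub_one {t f : ℕ → ℝ} (ht0 : t 0 = 1)
    (hf : ∀ m, f (m + 1) = -t (m + 1) - ∑ n ∈ range (m + 1), t n * ppSum f m (m + 1 - n))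
    (m : ℕ) : X ^ (m + 1) ∣ prodPoly f m * ∑ n ∈ range (m + 1), C (t n) * X ^ n - 1 := by
  refine X_pow_dvd_iff.mpr fun K hK => ?_
  rw [coeff_sub, coeff_one, mul_comm, coeff_mul, Nat.sum_antidiagonal_eq_sum_range_succ_mk]
  simp only [finsetSum_coeff, coeff_C_mul_X_pow, sum_ite_eq, coeff_prodPoly]
  rcases K.eq_zero_or_pos with rfl | hK0
  · simp [ht0, ppSum_zero_right]
  · rw [sum_congr rfl fun i hi => by rw [if_pos (by simp at hi ⊢; omega)], Nat.succ_eq_add_one,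
      sum_mul_ppSum_eq_zero ht0 hf hK0 (by omega), if_neg hK0.ne']
    simp

lemma exists_abs_eval_le_of_mem_Icc (p : ℝ[X]) :
    ∃ B, 0 ≤ B ∧ ∀ y ∈ Set.Icc (0 : ℝ) 1, |p.eval y| ≤ B := by
  obtain ⟨B, hB⟩ := isCompact_Icc.exists_bound_of_continuousOn p.continuous.continuousOn
  exact ⟨B, (abs_nonneg _).trans (hB 0 ⟨le_rfl, zero_le_one⟩), hB⟩

lemma abs_mul_sub_one_le {P a T e N B K D : ℝ} (hP : |P| ≤ B) (ha : |a - T| ≤ K / N)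
    (hPT : P * T - 1 = e / N) (he : |e| ≤ D) (hN : 0 < N) : |P * a - 1| ≤ (B * K + D) / N := by
  calc |P * a - 1| = |P * (a - T) + (P * T - 1)| := by ring_nf
    _ ≤ |P| * |a - T| + |P * T - 1| := by rw [← abs_mul]; exact abs_add_le _ _
    _ = |P| * |a - T| + |e| / N := by rw [hPT, abs_div, abs_of_pos hN]
    _ ≤ B * (K / N) + D / N := by
        gcongr
        exact (abs_nonneg _).trans hP
    _ = (B * K + D) / N := by ring

lemma tcoef_zero (α γ : ℝ) : tcoef α γ 0 = 1 := by
  simp [tcoef, stirling2, poch]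

theorem product_formula_general (α γ : ℝ) (hα0 : 0 < α) (hα1 : α < 1) (hγ : 0 < γ)
    (f : ℕ → ℝ)
    (hf : ∀ m : ℕ, f (m+1) = -tcoef α γ (m+1)
      - ∑ n ∈ Finset.range (m+1), tcoef α γ n * ppSum f m (m+1-n)) :
    ∀ m : ℕ, ∃ C : ℝ, 0 < C ∧ ∀ j : ℕ, 1 ≤ j →
      |(1 - α) ^ γ * (∏ i ∈ Finset.Icc 1 m, (1 + f i / (j : ℝ)^i)) * Fseq α γ j - 1|
        ≤ C / (j : ℝ)^(m+1) := by
  intro m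
  obtain ⟨E, hE⟩ := X_pow_dvd_prodPoly_mul_sub_one (tcoef_zero α γ) hf m
  obtain ⟨B, hB0, hB⟩ := exists_abs_eval_le_of_mem_Icc (prodPoly f m)
  obtain ⟨D, hD0, hD⟩ := exists_abs_eval_le_of_mem_Icc E
  refine ⟨B * |tcoef α γ (m + 1)| + D + 1, by positivity, fun j hj => ?_⟩
  have hy : (j : ℝ)⁻¹ ∈ Set.Icc (0 : ℝ) 1 :=
    ⟨by positivity, inv_le_one_of_one_le₀ (by exact_mod_cast hj)⟩
  have hP : (prodPoly f m).eval (j : ℝ)⁻¹ = ∏ i ∈ Icc 1 m, (1 + f i / (j : ℝ) ^ i) := by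
    simp [prodPoly, eval_prod, div_eq_mul_inv]
  have hPT : (prodPoly f m).eval (j : ℝ)⁻¹ * ∑ n ∈ range (m + 1), tcoef α γ n / (j : ℝ) ^ n - 1
      = E.eval (j : ℝ)⁻¹ / (j : ℝ) ^ (m + 1) := by
    have h := congrArg (eval (j : ℝ)⁻¹) hE
    simp only [eval_sub, eval_mul, eval_one, eval_pow, eval_X, eval_finsetSum, eval_C, inv_pow] at h
    simp only [div_eq_mul_inv]
    rw [h, mul_comm]
  rw [mul_comm _ (∏ i ∈ Icc 1 m, _), mul_assoc, ← hP]
  refine (abs_mul_sub_one_le (hB _ hy) (abs_mul_Fseq_sub_sum_tcoef_le hα0.le hα1 hγ m (by omega))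
    hPT (hD _ hy) (by positivity)).trans ?_
  exact div_le_div_of_nonneg_right (by linarith) (by positivity)

/-- Let `0 < α < 1`, `γ > 0`, and let `(f_m)` satisfy the recursion
`f_0 = 1`, `f_{m+1} = −t_{m+1} − ∑_{n=0}^m t_n ∑ f_{l_s}⋯f_{l_1}`.
Then for each `m`, `(1−α)^γ ∏_{i=1}^m (1 + f_i j^{−i}) F_j = 1 + O(j^{−m−1})` as `j → ∞`. -/
theorem product_formula (α γ : ℝ) (hα0 : 0 < α) (hα1 : α < 1) (hγ : 0 < γ)
    (f : ℕ → ℝ) (hf0 : f 0 = 1)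
    (hf : ∀ m : ℕ, f (m+1) = -tcoef α γ (m+1)
      - ∑ n ∈ Finset.range (m+1), tcoef α γ n * ppSum f m (m+1-n)) :
    ∀ m : ℕ, ∃ C : ℝ, 0 < C ∧ ∀ j : ℕ, 1 ≤ j →
      |(1 - α) ^ γ * (∏ i ∈ Finset.Icc 1 m, (1 + f i / (j : ℝ)^i)) * Fseq α γ j - 1|
        ≤ C / (j : ℝ)^(m+1) :=
  product_formula_general α γ hα0 hα1 hγ f hf
end

section
/- Let m ∈ ℕ with m ≥ 1, let c ∈ ℂ, and let ρ_0, …, ρ_{m−1} ∈ ℂ be the m roots of the equation z^m = −c (so that j^m + c = ∏_{k=0}^{m−1}(j − ρ_k) for all j). Let t ∈ ℂ be such that t is not a positive integer, and for each k, neither 1 − ρ_k nor 1 − t − ρ_k is a nonpositive integer. Then the infinite product ∏_{j=1}^∞ (1 + c j^{−m}) / (1 + c (j − t)^{−m}) converges and equals ∏_{k=0}^{m−1} Γ(1 − t − ρ_k) / (Γ(1 − t) Γ(1 − ρ_k)), where Γ is the complex Gamma function. -/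
/-!
Factoring `w ^ m + c = ∏ₖ (w - ρₖ)` at `w = j` and `w = j - t` turns the `j`-th factor into
`∏ₖ (j - ρₖ)(j - t) / (j (j - t - ρₖ))`, so for each `k` the partial products are a ratio of
rising factorials `(1 - ρₖ)_N (1 - t)_N / ((1)_N (1 - t - ρₖ)_N)`. Because
`(1 - ρₖ) + (1 - t) = 1 + (1 - t - ρₖ)`, the powers `N ^ s` in Euler's limit
`Γ(s) = lim N ^ s N! / (s (s + 1) ⋯ (s + N))` cancel in this ratio, which therefore tends to
`Γ(1) Γ(1 - t - ρₖ) / (Γ(1 - ρₖ) Γ(1 - t))`.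
-/

open Filter Finset Complex Topology

theorem prod_Icc_one_eq_prod_range {M : Type*} [CommMonoid M] (f : ℕ → M) (N : ℕ) :
    ∏ j ∈ Icc 1 N, f j = ∏ j ∈ range N, f (j + 1) := by
  rw [← Finset.Ico_add_one_right_eq_Icc, prod_Ico_eq_prod_range, Nat.add_sub_cancel]
  simp only [add_comm]

theorem GammaSeq_mul_div_GammaSeq_mul {a b c d : ℂ} (h : a + b = c + d) {n : ℕ} (hn : n ≠ 0) :
    GammaSeq c n * GammaSeq d n / (GammaSeq a n * GammaSeq b n) =
      ∏ j ∈ range (n + 1), ((a + j) * (b + j) / ((c + j) * (d + j))) := by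
  have hpow (s : ℂ) : (n : ℂ) ^ s ≠ 0 := by simp [cpow_eq_zero_iff, hn]
  have hfac : (n.factorial : ℂ) ≠ 0 := Nat.cast_ne_zero.mpr n.factorial_ne_zero
  have hcpow : (n : ℂ) ^ c * (n : ℂ) ^ d = (n : ℂ) ^ a * (n : ℂ) ^ b := by
    rw [← cpow_add _ _ (by exact_mod_cast hn), ← cpow_add _ _ (by exact_mod_cast hn), h]
  simp only [GammaSeq, prod_div_distrib, prod_mul_distrib]
  field_simp [hpow a, hpow b]
  rw [hcpow]
  ring

theorem tendsto_prod_range_mul_div_mul {a b c d : ℂ} (h : a + b = c + d)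
    (ha : ∀ n : ℕ, a ≠ -n) (hb : ∀ n : ℕ, b ≠ -n) :
    Tendsto (fun n ↦ ∏ j ∈ range n, ((a + j) * (b + j) / ((c + j) * (d + j)))) atTop
      (𝓝 (Gamma c * Gamma d / (Gamma a * Gamma b))) := by
  have hlim := ((GammaSeq_tendsto_Gamma c).mul (GammaSeq_tendsto_Gamma d)).div
    ((GammaSeq_tendsto_Gamma a).mul (GammaSeq_tendsto_Gamma b))
    (mul_ne_zero (Gamma_ne_zero ha) (Gamma_ne_zero hb))
  rw [← tendsto_add_atTop_iff_nat 1]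
  refine hlim.congr' ?_
  filter_upwards [eventually_ne_atTop 0] with n hn
  exact GammaSeq_mul_div_GammaSeq_mul h hn

theorem tendsto_prod_Icc_gamma_ratio {t a : ℂ} (ht : ∀ n : ℕ, 1 - t ≠ -n)
    (ha : ∀ n : ℕ, 1 - a ≠ -n) :
    Tendsto (fun N : ℕ ↦
        ∏ j ∈ Icc 1 N, (((j : ℂ) - a) * ((j : ℂ) - t) / ((j : ℂ) * ((j : ℂ) - t - a))))
      atTop (𝓝 (Gamma (1 - t - a) / (Gamma (1 - t) * Gamma (1 - a)))) := by
  have hlim := tendsto_prod_range_mul_div_mul (c := 1) (d := 1 - t - a) (by ring) ha ht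
  rw [Gamma_one, one_mul, mul_comm (Gamma (1 - a))] at hlim
  refine hlim.congr fun N ↦ ?_
  rw [prod_Icc_one_eq_prod_range]
  refine prod_congr rfl fun j _ ↦ ?_
  push_cast
  ring

section RootFactorization

variable {K : Type*} [Field K] {m : ℕ} {c : K} {ρ : Fin m → K}

theorem one_add_div_pow_eq_prod_div (hρ : ∀ w : K, w ^ m + c = ∏ k, (w - ρ k)) {w : K}
    (hw : w ≠ 0) : 1 + c / w ^ m = (∏ k, (w - ρ k)) / w ^ m := by
  rw [← hρ]
  field_simp

theorem one_add_div_pow_div_one_add_div_pow (hρ : ∀ w : K, w ^ m + c = ∏ k, (w - ρ k))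
    {w u : K} (hw : w ≠ 0) (hu : u ≠ 0) :
    (1 + c / w ^ m) / (1 + c / u ^ m) = ∏ k, ((w - ρ k) * u / (w * (u - ρ k))) := by
  rw [one_add_div_pow_eq_prod_div hρ hw, one_add_div_pow_eq_prod_div hρ hu, div_div_div_eq,
    prod_div_distrib, prod_mul_distrib, prod_mul_distrib, prod_const, prod_const, card_univ,
    Fintype.card_fin]

end RootFactorization

open Filter in
theorem gamma_product_general_general (m : ℕ) (c : ℂ) (ρ : Fin m → ℂ)
    (hρ : ∀ w : ℂ, w^m + c = ∏ k : Fin m, (w - ρ k))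
    (t : ℂ) (ht : ∀ n : ℕ, 0 < n → t ≠ (n : ℂ))
    (hρ1 : ∀ k : Fin m, ∀ n : ℕ, 1 - ρ k ≠ -(n : ℂ)) :
    Tendsto (fun N : ℕ =>
        ∏ j ∈ Finset.Icc 1 N, (1 + c / (j : ℂ)^m) / (1 + c / ((j : ℂ) - t)^m))
      atTop
      (nhds (∏ k : Fin m,
        Complex.Gamma (1 - t - ρ k) / (Complex.Gamma (1 - t) * Complex.Gamma (1 - ρ k)))) := by
  have h1t (n : ℕ) : 1 - t ≠ -n := fun h ↦
    ht (n + 1) n.succ_pos (by push_cast; linear_combination -h)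
  have hfactor (N : ℕ) : ∏ j ∈ Icc 1 N, (1 + c / (j : ℂ) ^ m) / (1 + c / ((j : ℂ) - t) ^ m) =
      ∏ k, ∏ j ∈ Icc 1 N, (((j : ℂ) - ρ k) * ((j : ℂ) - t) / ((j : ℂ) * ((j : ℂ) - t - ρ k))) := by
    rw [Finset.prod_comm]
    refine prod_congr rfl fun j hj ↦ ?_
    have hj : 1 ≤ j := (mem_Icc.mp hj).1
    exact one_add_div_pow_div_one_add_div_pow hρ (Nat.cast_ne_zero.mpr (by omega))
      (sub_ne_zero.mpr fun h ↦ ht j hj h.symm)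
  simp only [hfactor]
  exact tendsto_finsetProd _ fun k _ ↦ tendsto_prod_Icc_gamma_ratio h1t (hρ1 k)

open Filter in
/-- Let `m ≥ 1`, `c ∈ ℂ`, and let `ρ_0,…,ρ_{m−1}` be the roots of `z^m = −c`, so that
`w^m + c = ∏_k (w − ρ_k)` for all `w`. If `t` is not a positive integer and, for each `k`,
neither `1 − ρ_k` nor `1 − t − ρ_k` is a nonpositive integer, then
`∏_{j=1}^∞ (1 + c j^{−m})/(1 + c (j−t)^{−m})` converges to
`∏_{k=0}^{m−1} Γ(1 − t − ρ_k)/(Γ(1 − t) Γ(1 − ρ_k))`. -/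
theorem gamma_product_general (m : ℕ) (hm : 1 ≤ m) (c : ℂ) (ρ : Fin m → ℂ)
    (hρ : ∀ w : ℂ, w^m + c = ∏ k : Fin m, (w - ρ k))
    (t : ℂ) (ht : ∀ n : ℕ, 0 < n → t ≠ (n : ℂ))
    (hρ1 : ∀ k : Fin m, ∀ n : ℕ, 1 - ρ k ≠ -(n : ℂ))
    (hρ2 : ∀ k : Fin m, ∀ n : ℕ, 1 - t - ρ k ≠ -(n : ℂ)) :
    Tendsto (fun N : ℕ =>
        ∏ j ∈ Finset.Icc 1 N, (1 + c / (j : ℂ)^m) / (1 + c / ((j : ℂ) - t)^m))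
      atTop
      (nhds (∏ k : Fin m,
        Complex.Gamma (1 - t - ρ k) / (Complex.Gamma (1 - t) * Complex.Gamma (1 - ρ k)))) :=
  gamma_product_general_general m c ρ hρ t ht hρ1
end
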